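/- arXiv:2106.11703 — 2 statements merged into one kernel-verified Lean document; each statement's English description precedes it below -/
import Mathlib

section
/- The join of a nonempty path-connected space with any nonempty space is simply connected. -/
/-- The relation defining the topological join: `(a,b,0) ~ (a,b',0)` and `(a,b,1) ~ (a',b,1)`. -/
inductive JoinRel (A B : Type*) : A × B × unitInterval → A × B × unitInterval → Prop
  | zero (a : A) (b b' : B) : JoinRel A B (a, b, 0) (a, b', 0)
  | one (a a' : A) (b : B) : JoinRel A B (a, b, 1) (a', b, 1)

/-- The topological join `A * B`, as a quotient of `A × B × [0,1]`. -/
def TopJoin (A B : Type*) : Type _ := Quot (JoinRel A B)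

instance (A B : Type*) [TopologicalSpace A] [TopologicalSpace B] :
    TopologicalSpace (TopJoin A B) :=
  inferInstanceAs (TopologicalSpace (Quot _))

set_option linter.unusedSectionVars false
set_option maxHeartbeats 1000000
open unitInterval Topology
noncomputable section
namespace TopJoinProof
variable {A B : Type*} [TopologicalSpace A] [TopologicalSpace B]

def j (a : A) (b : B) (t : unitInterval) : TopJoin A B := Quot.mk _ (a, b, t)

lemma continuous_j : Continuous (fun q : A × B × unitInterval => (j q.1 q.2.1 q.2.2 : TopJoin A B)) := by
  have : (fun q : A × B × unitInterval => (j q.1 q.2.1 q.2.2 : TopJoin A B)) = Quot.mk _ := by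
    funext q; rfl
  rw [this]
  exact continuous_quot_mk

lemma j_zero (a : A) (b b' : B) : (j a b 0 : TopJoin A B) = j a b' 0 := Quot.sound (.zero ..)
lemma j_one (a a' : A) (b : B) : (j a b 1 : TopJoin A B) = j a' b 1 := Quot.sound (.one ..)

/-- the height coordinate -/
def tc : TopJoin A B → unitInterval :=
  Quot.lift (fun q => q.2.2) (by rintro _ _ (h | h) <;> rfl)

@[simp] lemma tc_j (a : A) (b : B) (t : unitInterval) : tc (j a b t : TopJoin A B) = t := rfl

lemma continuous_tc : Continuous (tc : TopJoin A B → unitInterval) :=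
  continuous_coinduced_dom.mpr (by exact continuous_snd.comp continuous_snd)

private noncomputable def acOpt : TopJoin A B → Option A :=
  Quot.lift (fun q => if q.2.2 = 1 then none else some q.1)
    (by rintro _ _ (⟨a, b, b'⟩ | ⟨a, a', b⟩) <;> simp)

private noncomputable def bcOpt : TopJoin A B → Option B :=
  Quot.lift (fun q => if q.2.2 = 0 then none else some q.2.1)
    (by rintro _ _ (⟨a, b, b'⟩ | ⟨a, a', b⟩) <;> simp)

lemma a_eq {a a' : A} {b b' : B} {t t' : unitInterval}
    (h : (j a b t : TopJoin A B) = j a' b' t') (ht : t ≠ 1) : a = a' := by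
  have h2 := congrArg acOpt h
  have ht' : t' = t := congrArg tc h.symm
  subst ht'
  simpa [acOpt, j, ht] using h2

lemma b_eq {a a' : A} {b b' : B} {t t' : unitInterval}
    (h : (j a b t : TopJoin A B) = j a' b' t') (ht : t ≠ 0) : b = b' := by
  have h2 := congrArg bcOpt h
  have ht' : t' = t := congrArg tc h.symm
  subst ht'
  simpa [bcOpt, j, ht] using h2

lemma t_eq {a a' : A} {b b' : B} {t t' : unitInterval}
    (h : (j a b t : TopJoin A B) = j a' b' t') : t = t' := congrArg tc h

/-- a chosen representative -/
noncomputable def rep (x : TopJoin A B) : A × B × unitInterval :=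
  (Quot.exists_rep x).choose

noncomputable def ar (x : TopJoin A B) : A := (rep x).1
noncomputable def br (x : TopJoin A B) : B := (rep x).2.1

lemma rep_spec (x : TopJoin A B) : x = j (ar x) (br x) (tc x) := by
  have h := (Quot.exists_rep x).choose_spec
  have : x = j (rep x).1 (rep x).2.1 (rep x).2.2 := h.symm
  have htc : tc x = (rep x).2.2 := by conv_lhs => rw [this, tc_j]
  rw [ar, br, htc]; exact this

lemma ar_eq {a : A} {b : B} {t : unitInterval} (h : (j a b t : TopJoin A B) = x)
    (ht : t ≠ 1) : ar x = a := by
  have := rep_spec x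
  have h2 : (j a b t : TopJoin A B) = j (ar x) (br x) (tc x) := by rw [h, ← this]
  exact (a_eq h2 ht).symm

lemma br_eq {a : A} {b : B} {t : unitInterval} (h : (j a b t : TopJoin A B) = x)
    (ht : t ≠ 0) : br x = b := by
  have := rep_spec x
  have h2 : (j a b t : TopJoin A B) = j (ar x) (br x) (tc x) := by rw [h, ← this]
  exact (b_eq h2 ht).symm


/-- straight-line path in the unit interval -/
def iaff (u v : I) : Path u v where
  toFun s := ⟨(1 - s) * u + s * v, by
    constructor
    · nlinarith [s.2.1, s.2.2, u.2.1, u.2.2, v.2.1, v.2.2]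
    · nlinarith [s.2.1, s.2.2, u.2.1, u.2.2, v.2.1, v.2.2]⟩
  continuous_toFun := by fun_prop
  source' := by ext; simp
  target' := by ext; simp

@[simp] lemma iaff_apply (u v : I) (s : I) :
    ((iaff u v s : I) : ℝ) = (1 - s) * u + s * v := rfl

/-- any two paths in `I` with the same endpoints are homotopic -/
lemma ihom {u v : I} (p q : Path u v) : p.Homotopic q := by
  refine ⟨⟨⟨⟨fun x => ⟨(1 - x.1) * (p x.2 : ℝ) + x.1 * (q x.2 : ℝ), ?_⟩, ?_⟩, ?_, ?_⟩, ?_⟩⟩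
  · constructor
    · nlinarith [x.1.2.1, x.1.2.2, (p x.2).2.1, (p x.2).2.2, (q x.2).2.1, (q x.2).2.2]
    · nlinarith [x.1.2.1, x.1.2.2, (p x.2).2.1, (p x.2).2.2, (q x.2).2.1, (q x.2).2.2]
  · fun_prop
  · intro x; ext; simp
  · intro x; ext; simp
  · intro t x hx
    rcases hx with hx | hx <;> subst hx <;> ext <;> simp <;> ring

lemma ihom2 {u v : I × I} (p q : Path u v) : p.Homotopic q := by
  have hp : p = Path.prod (p.map continuous_fst) (p.map continuous_snd) := by
    ext s <;> rfl
  have hq : q = Path.prod (q.map continuous_fst) (q.map continuous_snd) := by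
    ext s <;> rfl
  rw [hp, hq]
  exact ⟨Path.Homotopic.prodHomotopy (ihom _ _).some (ihom _ _).some⟩



attribute [local instance] Path.Homotopic.setoid

@[simp] lemma iaff_zero_one (t : I) : iaff 0 1 t = t := by ext; simp

section Square
variable {X : Type*} [TopologicalSpace X]

lemma square (H : C(I × I, X)) {x x' y y' : X}
    (bot : Path x y) (top : Path x' y') (left : Path x x') (right : Path y y')
    (hb : ∀ s, bot s = H (s, 0)) (ht : ∀ s, top s = H (s, 1))
    (hl : ∀ r, left r = H (0, r)) (hr : ∀ r, right r = H (1, r)) :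
    (⟦bot.trans right⟧ : Path.Homotopic.Quotient x y') = ⟦left.trans top⟧ := by
  let P1 : Path ((0,0) : I × I) ((1,1) : I × I) :=
    (Path.prod (iaff 0 1) (Path.refl 0)).trans (Path.prod (Path.refl 1) (iaff 0 1))
  let P2 : Path ((0,0) : I × I) ((1,1) : I × I) :=
    (Path.prod (Path.refl 0) (iaff 0 1)).trans (Path.prod (iaff 0 1) (Path.refl 1))
  have hx : x = H (0, 0) := by rw [← hb 0, bot.source]
  have hy : y = H (1, 0) := by rw [← hb 1, bot.target]
  have hx' : x' = H (0, 1) := by rw [← ht 0, top.source]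
  have hy' : y' = H (1, 1) := by rw [← ht 1, top.target]
  have e1 : bot.trans right = (P1.map H.continuous).cast hx hy' := by
    ext s
    simp only [Path.cast_coe, Path.map_coe, Path.trans_apply, Function.comp_apply, P1]
    split_ifs with h
    · rw [hb]; congr 1; refine Prod.ext ?_ rfl; exact (iaff_zero_one _).symm
    · rw [hr]; congr 1; refine Prod.ext rfl ?_; exact (iaff_zero_one _).symm
  have e2 : left.trans top = (P2.map H.continuous).cast hx hy' := by
    ext s
    simp only [Path.cast_coe, Path.map_coe, Path.trans_apply, Function.comp_apply, P2]
    split_ifs with h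
    · rw [hl]; congr 1; refine Prod.ext rfl ?_; exact (iaff_zero_one _).symm
    · rw [ht]; congr 1; refine Prod.ext ?_ rfl; exact (iaff_zero_one _).symm
  rw [e1, e2]
  have h12 : P1.Homotopic P2 := ihom2 P1 P2
  have := Path.Homotopic.map h12 H
  exact Quotient.sound (by subst hx hy'; exact this)
end Square

section Restrict

lemma isQuotientMap_restrict {φ : unitInterval → Prop} (hφ : IsOpen {t | φ t}) :
    IsQuotientMap (fun q : {q : A × B × unitInterval // φ q.2.2} =>
      (⟨Quot.mk _ q.1, q.2⟩ : {x : TopJoin A B // φ (tc x)})) := by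
  refine ⟨isCoinducing_iff.mpr ?_, ?_⟩
  rotate_left
  · rintro ⟨x, hx⟩
    obtain ⟨q, rfl⟩ := Quot.exists_rep x
    exact ⟨⟨q, hx⟩, rfl⟩
  · intro T
    refine Iff.symm ?_
    constructor
    · intro hT
      exact hT.preimage (show Continuous (fun q : {q : A × B × unitInterval // φ q.2.2} =>
        (⟨Quot.mk _ q.1, q.2⟩ : {x : TopJoin A B // φ (tc x)})) from
        (continuous_quot_mk.comp continuous_subtype_val).subtype_mk _)
    · intro hW
      set Sa : Set (A × B × unitInterval) := {q | φ q.2.2} with hSa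
      set Wv : Set (A × B × unitInterval) := Subtype.val ''
        ((fun q : {q : A × B × unitInterval // φ q.2.2} =>
          (⟨Quot.mk _ q.1, q.2⟩ : {x : TopJoin A B // φ (tc x)})) ⁻¹' T) with hWv
      have hSaOpen : IsOpen Sa := hφ.preimage (continuous_snd.comp continuous_snd)
      have hWvOpen : IsOpen Wv := hSaOpen.isOpenMap_subtype_val _ hW
      have memWv : ∀ q : A × B × unitInterval, q ∈ Wv ↔
          ∃ h : φ q.2.2, (⟨Quot.mk _ q, h⟩ : {x : TopJoin A B // φ (tc x)}) ∈ T := by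
        intro q
        constructor
        · rintro ⟨⟨q₀, h₀⟩, hmem, rfl⟩
          exact ⟨h₀, hmem⟩
        · rintro ⟨h, hmem⟩
          exact ⟨⟨q, h⟩, hmem, rfl⟩
      have hsat : Quot.mk (JoinRel A B) ⁻¹' (Quot.mk (JoinRel A B) '' Wv) = Wv := by
        apply Set.Subset.antisymm
        · rintro q' ⟨q, hqW, hqq⟩
          rw [memWv] at hqW ⊢
          obtain ⟨h, hT⟩ := hqW
          have ht : q.2.2 = q'.2.2 := congrArg tc hqq
          refine ⟨show φ q'.2.2 from ht ▸ h, ?_⟩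
          have heq : (⟨Quot.mk _ q', show φ q'.2.2 from ht ▸ h⟩ : {x : TopJoin A B // φ (tc x)}) =
              ⟨Quot.mk _ q, h⟩ := Subtype.ext hqq.symm
          rw [heq]; exact hT
        · exact Set.subset_preimage_image _ _
      have himg : IsOpen (Quot.mk (JoinRel A B) '' Wv) :=
        isQuotientMap_quot_mk.isOpen_preimage.mp (hsat.symm ▸ hWvOpen)
      have hTeq : T = (Subtype.val : {x : TopJoin A B // φ (tc x)} → TopJoin A B) ⁻¹'
          (Quot.mk (JoinRel A B) '' Wv) := by
        ext ⟨x, hx⟩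
        show (⟨x, hx⟩ : {x : TopJoin A B // φ (tc x)}) ∈ T ↔ x ∈ Quot.mk (JoinRel A B) '' Wv
        constructor
        · intro hT
          obtain ⟨q, hq⟩ := Quot.exists_rep x
          refine ⟨q, ?_, hq⟩
          rw [memWv]
          have hφq : φ q.2.2 := by
            have : q.2.2 = tc x := by rw [← hq]; rfl
            rw [this]; exact hx
          refine ⟨hφq, ?_⟩
          have heq : (⟨Quot.mk _ q, hφq⟩ : {x : TopJoin A B // φ (tc x)}) = ⟨x, hx⟩ :=
            Subtype.ext hq
          rw [heq]; exact hT
        · rintro ⟨q, hqW, hq⟩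
          rw [memWv] at hqW
          obtain ⟨h, hT⟩ := hqW
          have heq : (⟨x, hx⟩ : {x : TopJoin A B // φ (tc x)}) = ⟨Quot.mk _ q, h⟩ :=
            Subtype.ext hq.symm
          rw [heq]; exact hT
      rw [hTeq]
      exact himg.preimage continuous_subtype_val

lemma continuous_arU : Continuous (fun x : {x : TopJoin A B // tc x ≠ 1} => ar x.1) := by
  rw [(isQuotientMap_restrict (φ := fun t => t ≠ 1) isOpen_ne).continuous_iff]
  have : ((fun x : {x : TopJoin A B // tc x ≠ 1} => ar x.1) ∘
      (fun q : {q : A × B × unitInterval // q.2.2 ≠ 1} =>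
        (⟨Quot.mk _ q.1, q.2⟩ : {x : TopJoin A B // tc x ≠ 1}))) =
      fun q => q.1.1 := by
    funext q
    exact ar_eq rfl q.2
  rw [this]
  exact continuous_fst.comp continuous_subtype_val

lemma continuous_brV : Continuous (fun x : {x : TopJoin A B // tc x ≠ 0} => br x.1) := by
  rw [(isQuotientMap_restrict (φ := fun t => t ≠ 0) isOpen_ne).continuous_iff]
  have : ((fun x : {x : TopJoin A B // tc x ≠ 0} => br x.1) ∘
      (fun q : {q : A × B × unitInterval // q.2.2 ≠ 0} =>
        (⟨Quot.mk _ q.1, q.2⟩ : {x : TopJoin A B // tc x ≠ 0}))) =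
      fun q => q.1.2.1 := by
    funext q
    exact br_eq rfl q.2
  rw [this]
  exact (continuous_fst.comp continuous_snd).comp continuous_subtype_val

end Restrict

open CategoryTheory

section Groupoid
variable {X : Type*} [TopologicalSpace X]

/-- path class as a morphism in the fundamental groupoid -/
def hcl {x y : X} (p : Path x y) :
    FundamentalGroupoid.mk x ⟶ FundamentalGroupoid.mk y := ⟦p⟧

lemma hcl_trans {x y z : X} (p : Path x y) (q : Path y z) :
    hcl (p.trans q) = hcl p ≫ hcl q := rfl

lemma hcl_symm {x y : X} (p : Path x y) : hcl p.symm = Groupoid.inv (hcl p) := rfl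

lemma hcl_refl (x : X) : hcl (Path.refl x) = 𝟙 (FundamentalGroupoid.mk x) := rfl

lemma square' (H : C(I × I, X)) {x x' y y' : X}
    (bot : Path x y) (top : Path x' y') (left : Path x x') (right : Path y y')
    (hb : ∀ s, bot s = H (s, 0)) (ht : ∀ s, top s = H (s, 1))
    (hl : ∀ r, left r = H (0, r)) (hr : ∀ r, right r = H (1, r)) :
    hcl bot ≫ hcl right = hcl left ≫ hcl top := by
  rw [← hcl_trans, ← hcl_trans]
  exact square H bot top left right hb ht hl hr

end Groupoid

section Scale

def isc (r t : I) : I := ⟨(1 - (r : ℝ)) * t, by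
  constructor <;> nlinarith [r.2.1, r.2.2, t.2.1, t.2.2]⟩

@[simp] lemma isc_zero (t : I) : isc 0 t = t := by ext; simp [isc]
@[simp] lemma isc_one (t : I) : isc 1 t = 0 := by ext; simp [isc]
@[simp] lemma isc_t_zero (r : I) : isc r 0 = 0 := by ext; simp [isc]

lemma continuous_isc : Continuous (fun p : I × I => isc p.1 p.2) := by
  apply Continuous.subtype_mk
  fun_prop

def ksc (r t : I) : I := ⟨(1 - (r : ℝ)) * t + r, by
  constructor <;> nlinarith [r.2.1, r.2.2, t.2.1, t.2.2]⟩

@[simp] lemma ksc_zero (t : I) : ksc 0 t = t := by ext; simp [ksc]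
@[simp] lemma ksc_one (t : I) : ksc 1 t = 1 := by ext; simp [ksc]
@[simp] lemma ksc_t_one (r : I) : ksc r 1 = 1 := by ext; simp [ksc]

lemma continuous_ksc : Continuous (fun p : I × I => ksc p.1 p.2) := by
  apply Continuous.subtype_mk
  fun_prop

end Scale

lemma continuous_j_comp {Z : Type*} [TopologicalSpace Z] {f : Z → A} {g : Z → B} {h : Z → I}
    (hf : Continuous f) (hg : Continuous g) (hh : Continuous h) :
    Continuous (fun z => (j (f z) (g z) (h z) : TopJoin A B)) :=
  continuous_j.comp (hf.prodMk (hg.prodMk hh))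

section PD

/-- pushing down, as a continuous family of continuous maps on `{tc ≠ 1}` -/
def PDcur (x : {x : TopJoin A B // tc x ≠ 1}) : C(I, TopJoin A B) :=
  ⟨fun r => j (ar x.1) (br x.1) (isc r (tc x.1)),
    continuous_j_comp continuous_const continuous_const
      (continuous_isc.comp (continuous_id.prodMk continuous_const))⟩

lemma continuous_PDcur : Continuous (PDcur (A := A) (B := B)) := by
  rw [(isQuotientMap_restrict (φ := fun t => t ≠ 1) isOpen_ne).continuous_iff]
  have heq : (PDcur ∘ (fun q : {q : A × B × unitInterval // q.2.2 ≠ 1} =>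
      (⟨Quot.mk _ q.1, q.2⟩ : {x : TopJoin A B // tc x ≠ 1}))) =
      fun q => ⟨fun r => j q.1.1 q.1.2.1 (isc r q.1.2.2),
        continuous_j_comp continuous_const continuous_const
          (continuous_isc.comp (continuous_id.prodMk continuous_const))⟩ := by
    funext q
    ext r
    show (j (ar (Quot.mk _ q.1)) (br (Quot.mk _ q.1)) (isc r (tc (Quot.mk _ q.1))) : TopJoin A B)
      = j q.1.1 q.1.2.1 (isc r q.1.2.2)
    have ha : ar (Quot.mk (JoinRel A B) q.1) = q.1.1 := ar_eq rfl q.2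
    have htc : tc (Quot.mk (JoinRel A B) q.1) = q.1.2.2 := rfl
    rw [ha, htc]
    by_cases h0 : q.1.2.2 = 0
    · rw [h0, isc_t_zero]
      exact j_zero _ _ _
    · have hbq : br (Quot.mk (JoinRel A B) q.1) = q.1.2.1 :=
        br_eq (x := Quot.mk (JoinRel A B) q.1) rfl h0
      rw [hbq]
  rw [heq]
  apply ContinuousMap.continuous_of_continuous_uncurry
  exact continuous_j_comp (continuous_fst.comp (continuous_subtype_val.comp continuous_fst))
    (continuous_fst.comp (continuous_snd.comp (continuous_subtype_val.comp continuous_fst)))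
    ((continuous_isc.comp (continuous_snd.prodMk
      (continuous_snd.comp (continuous_snd.comp (continuous_subtype_val.comp continuous_fst))))))

/-- pushing up, on `{tc ≠ 0}` -/
def PUcur (x : {x : TopJoin A B // tc x ≠ 0}) : C(I, TopJoin A B) :=
  ⟨fun r => j (ar x.1) (br x.1) (ksc r (tc x.1)),
    continuous_j_comp continuous_const continuous_const
      (continuous_ksc.comp (continuous_id.prodMk continuous_const))⟩

lemma continuous_PUcur : Continuous (PUcur (A := A) (B := B)) := by
  rw [(isQuotientMap_restrict (φ := fun t => t ≠ 0) isOpen_ne).continuous_iff]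
  have heq : (PUcur ∘ (fun q : {q : A × B × unitInterval // q.2.2 ≠ 0} =>
      (⟨Quot.mk _ q.1, q.2⟩ : {x : TopJoin A B // tc x ≠ 0}))) =
      fun q => ⟨fun r => j q.1.1 q.1.2.1 (ksc r q.1.2.2),
        continuous_j_comp continuous_const continuous_const
          (continuous_ksc.comp (continuous_id.prodMk continuous_const))⟩ := by
    funext q
    ext r
    show (j (ar (Quot.mk _ q.1)) (br (Quot.mk _ q.1)) (ksc r (tc (Quot.mk _ q.1))) : TopJoin A B)
      = j q.1.1 q.1.2.1 (ksc r q.1.2.2)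
    have hb : br (Quot.mk (JoinRel A B) q.1) = q.1.2.1 := br_eq rfl q.2
    have htc : tc (Quot.mk (JoinRel A B) q.1) = q.1.2.2 := rfl
    rw [hb, htc]
    by_cases h1 : q.1.2.2 = 1
    · rw [h1, ksc_t_one]
      exact j_one _ _ _
    · have haq : ar (Quot.mk (JoinRel A B) q.1) = q.1.1 :=
        ar_eq (x := Quot.mk (JoinRel A B) q.1) rfl h1
      rw [haq]
  rw [heq]
  apply ContinuousMap.continuous_of_continuous_uncurry
  exact continuous_j_comp (continuous_fst.comp (continuous_subtype_val.comp continuous_fst))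
    (continuous_fst.comp (continuous_snd.comp (continuous_subtype_val.comp continuous_fst)))
    ((continuous_ksc.comp (continuous_snd.prodMk
      (continuous_snd.comp (continuous_snd.comp (continuous_subtype_val.comp continuous_fst))))))

end PD

lemma Ione_ne_zero : (1 : I) ≠ 0 := by
  intro h
  have := congrArg (Subtype.val) h
  norm_num at this

section Canon
variable (a0 : A) (b0 : B)

def baseP (a : A) : TopJoin A B := j a b0 0
def apexP (b : B) : TopJoin A B := j a0 b 1

def vert (a : A) (b : B) : Path (baseP (A := A) (B := B) b0 a) (apexP (A := A) (B := B) a0 b) where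
  toFun r := j a b r
  continuous_toFun := continuous_j_comp continuous_const continuous_const continuous_id
  source' := j_zero a b b0
  target' := j_one a a0 b

@[simp] lemma vert_apply (a : A) (b : B) (r : I) : vert a0 b0 a b r = j a b r := rfl

def wP (b : B) : Path (apexP (A := A) (B := B) a0 b) (baseP (A := A) (B := B) b0 a0) :=
  (vert a0 b0 a0 b).symm

def pdTrack (x : TopJoin A B) : Path x (baseP (A := A) (B := B) b0 (ar x)) where
  toFun r := j (ar x) (br x) (isc r (tc x))
  continuous_toFun := continuous_j_comp continuous_const continuous_const
    (continuous_isc.comp (continuous_id.prodMk continuous_const))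
  source' := by
    show (j (ar x) (br x) (isc 0 (tc x)) : TopJoin A B) = x
    rw [isc_zero]; exact (rep_spec x).symm
  target' := by
    show (j (ar x) (br x) (isc 1 (tc x)) : TopJoin A B) = baseP b0 (ar x)
    rw [isc_one]; exact j_zero _ _ _

def puTrack (x : TopJoin A B) : Path x (apexP (A := A) (B := B) a0 (br x)) where
  toFun r := j (ar x) (br x) (ksc r (tc x))
  continuous_toFun := continuous_j_comp continuous_const continuous_const
    (continuous_ksc.comp (continuous_id.prodMk continuous_const))
  source' := by
    show (j (ar x) (br x) (ksc 0 (tc x)) : TopJoin A B) = x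
    rw [ksc_zero]; exact (rep_spec x).symm
  target' := by
    show (j (ar x) (br x) (ksc 1 (tc x)) : TopJoin A B) = apexP a0 (br x)
    rw [ksc_one]; exact j_one _ _ _

def abar {a a' : A} (α : Path a a') : Path (baseP (A := A) (B := B) b0 a) (baseP (A := A) (B := B) b0 a') where
  toFun u := j (α u) b0 0
  continuous_toFun := continuous_j_comp α.continuous continuous_const continuous_const
  source' := congrArg (fun z => (j z b0 0 : TopJoin A B)) α.source
  target' := congrArg (fun z => (j z b0 0 : TopJoin A B)) α.target

def baseProj {x y : TopJoin A B} (δ : Path x y) (hδ : ∀ s, tc (δ s) ≠ 1) :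
    Path (baseP (A := A) (B := B) b0 (ar x)) (baseP (A := A) (B := B) b0 (ar y)) where
  toFun s := j (ar (δ s)) b0 0
  continuous_toFun := continuous_j_comp
    (continuous_arU.comp (Continuous.subtype_mk δ.continuous hδ)) continuous_const continuous_const
  source' := congrArg (fun z => (j (ar z) b0 0 : TopJoin A B)) δ.source
  target' := congrArg (fun z => (j (ar z) b0 0 : TopJoin A B)) δ.target

def apexProj {x y : TopJoin A B} (δ : Path x y) (hδ : ∀ s, tc (δ s) ≠ 0) :
    Path (apexP (A := A) (B := B) a0 (br x)) (apexP (A := A) (B := B) a0 (br y)) where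
  toFun s := j a0 (br (δ s)) 1
  continuous_toFun := continuous_j_comp continuous_const
    (continuous_brV.comp (Continuous.subtype_mk δ.continuous hδ)) continuous_const
  source' := congrArg (fun z => (j a0 (br z) 1 : TopJoin A B)) δ.source
  target' := congrArg (fun z => (j a0 (br z) 1 : TopJoin A B)) δ.target

noncomputable def cU (x : TopJoin A B) (_ : tc x ≠ 1) :
    (FundamentalGroupoid.mk x ⟶ FundamentalGroupoid.mk (apexP (A := A) (B := B) a0 b0)) :=
  hcl (pdTrack b0 x) ≫ hcl (vert a0 b0 (ar x) b0)

noncomputable def cV (x : TopJoin A B) (_ : tc x ≠ 0) :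
    (FundamentalGroupoid.mk x ⟶ FundamentalGroupoid.mk (baseP (A := A) (B := B) b0 a0)) :=
  hcl (puTrack a0 x) ≫ hcl (wP a0 b0 (br x))

noncomputable def θc :
    (FundamentalGroupoid.mk (apexP (A := A) (B := B) a0 b0) ⟶
      FundamentalGroupoid.mk (baseP (A := A) (B := B) b0 a0)) :=
  hcl (wP a0 b0 b0)

noncomputable def cc (x : TopJoin A B) :
    (FundamentalGroupoid.mk x ⟶ FundamentalGroupoid.mk (baseP (A := A) (B := B) b0 a0)) :=
  if h : tc x ≠ 1 then cU a0 b0 x h ≫ θc a0 b0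
  else cV a0 b0 x (fun h0 => Ione_ne_zero (by rw [not_not] at h; rw [← h, h0]))

lemma cU_spec {x y : TopJoin A B} (δ : Path x y) (hδ : ∀ s, tc (δ s) ≠ 1)
    (hx : tc x ≠ 1) (hy : tc y ≠ 1) :
    hcl δ = cU a0 b0 x hx ≫ inv (cU a0 b0 y hy) := by
  have hb0 : ∀ s, tc (δ s) ≠ 1 := hδ
  -- square 1 : push down
  have sq1 : hcl δ ≫ hcl (pdTrack b0 y) = hcl (pdTrack b0 x) ≫ hcl (baseProj b0 δ hδ) := by
    refine square' (ContinuousMap.uncurry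
      ⟨fun s => PDcur ⟨δ s, hδ s⟩,
        continuous_PDcur.comp (Continuous.subtype_mk δ.continuous hδ)⟩)
      δ (baseProj b0 δ hδ) (pdTrack b0 x) (pdTrack b0 y) ?_ ?_ ?_ ?_
    · intro s
      show δ s = j (ar (δ s)) (br (δ s)) (isc 0 (tc (δ s)))
      rw [isc_zero]; exact rep_spec _
    · intro s
      show (j (ar (δ s)) b0 0 : TopJoin A B) = j (ar (δ s)) (br (δ s)) (isc 1 (tc (δ s)))
      rw [isc_one]; exact (j_zero _ _ _).symm
    · intro r
      show pdTrack b0 x r = PDcur ⟨δ 0, hδ 0⟩ r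
      have heq : (⟨δ 0, hδ 0⟩ : {z : TopJoin A B // tc z ≠ 1}) = ⟨x, hx⟩ :=
        Subtype.ext δ.source
      rw [heq]; rfl
    · intro r
      show pdTrack b0 y r = PDcur ⟨δ 1, hδ 1⟩ r
      have heq : (⟨δ 1, hδ 1⟩ : {z : TopJoin A B // tc z ≠ 1}) = ⟨y, hy⟩ :=
        Subtype.ext δ.target
      rw [heq]; rfl
  -- square 2 : push the base path up the b0 cone
  have sq2 : hcl (baseProj b0 δ hδ) ≫ hcl (vert a0 b0 (ar y) b0) =
      hcl (vert a0 b0 (ar x) b0) ≫ hcl (Path.refl (apexP (A := A) (B := B) a0 b0)) := by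
    refine square' ⟨fun p => j (ar (δ p.1)) b0 p.2,
        continuous_j_comp
          (continuous_arU.comp ((Continuous.subtype_mk (δ.continuous.comp continuous_fst) (fun p : I × I => hδ p.1))))
          continuous_const continuous_snd⟩
      (baseProj b0 δ hδ) (Path.refl _) (vert a0 b0 (ar x) b0) (vert a0 b0 (ar y) b0) ?_ ?_ ?_ ?_
    · intro s; rfl
    · intro s
      show apexP (A := A) (B := B) a0 b0 = j (ar (δ s)) b0 1
      exact j_one a0 (ar (δ s)) b0
    · intro r
      exact congrArg (fun z => (j (ar z) b0 r : TopJoin A B)) δ.source.symm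
    · intro r
      exact congrArg (fun z => (j (ar z) b0 r : TopJoin A B)) δ.target.symm
  rw [hcl_refl, Category.comp_id] at sq2
  have h1 : hcl δ = hcl (pdTrack b0 x) ≫ hcl (baseProj b0 δ hδ) ≫ inv (hcl (pdTrack b0 y)) := by
    rw [← Category.assoc, IsIso.eq_comp_inv]; exact sq1
  have h2 : hcl (baseProj b0 δ hδ) = hcl (vert a0 b0 (ar x) b0) ≫ inv (hcl (vert a0 b0 (ar y) b0)) := by
    rw [IsIso.eq_comp_inv]; exact sq2
  rw [h1, h2, cU, cU]
  simp [Category.assoc]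

lemma cV_spec {x y : TopJoin A B} (δ : Path x y) (hδ : ∀ s, tc (δ s) ≠ 0)
    (hx : tc x ≠ 0) (hy : tc y ≠ 0) :
    hcl δ = cV a0 b0 x hx ≫ inv (cV a0 b0 y hy) := by
  -- square 1 : push up
  have sq1 : hcl δ ≫ hcl (puTrack a0 y) = hcl (puTrack a0 x) ≫ hcl (apexProj a0 δ hδ) := by
    refine square' (ContinuousMap.uncurry
      ⟨fun s => PUcur ⟨δ s, hδ s⟩,
        continuous_PUcur.comp (Continuous.subtype_mk δ.continuous hδ)⟩)
      δ (apexProj a0 δ hδ) (puTrack a0 x) (puTrack a0 y) ?_ ?_ ?_ ?_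
    · intro s
      show δ s = j (ar (δ s)) (br (δ s)) (ksc 0 (tc (δ s)))
      rw [ksc_zero]; exact rep_spec _
    · intro s
      show (j a0 (br (δ s)) 1 : TopJoin A B) = j (ar (δ s)) (br (δ s)) (ksc 1 (tc (δ s)))
      rw [ksc_one]; exact (j_one _ _ _).symm
    · intro r
      show puTrack a0 x r = PUcur ⟨δ 0, hδ 0⟩ r
      have heq : (⟨δ 0, hδ 0⟩ : {z : TopJoin A B // tc z ≠ 0}) = ⟨x, hx⟩ :=
        Subtype.ext δ.source
      rw [heq]; rfl
    · intro r
      show puTrack a0 y r = PUcur ⟨δ 1, hδ 1⟩ r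
      have heq : (⟨δ 1, hδ 1⟩ : {z : TopJoin A B // tc z ≠ 0}) = ⟨y, hy⟩ :=
        Subtype.ext δ.target
      rw [heq]; rfl
  -- square 2 : push the apex path down the a0 line
  have sq2 : hcl (apexProj a0 δ hδ) ≫ hcl (wP a0 b0 (br y)) =
      hcl (wP a0 b0 (br x)) ≫ hcl (Path.refl (baseP (A := A) (B := B) b0 a0)) := by
    refine square' ⟨fun p => j a0 (br (δ p.1)) (σ p.2),
        continuous_j_comp continuous_const
          (continuous_brV.comp ((Continuous.subtype_mk (δ.continuous.comp continuous_fst) (fun p : I × I => hδ p.1))))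
          (continuous_symm.comp continuous_snd)⟩
      (apexProj a0 δ hδ) (Path.refl _) (wP a0 b0 (br x)) (wP a0 b0 (br y)) ?_ ?_ ?_ ?_
    · intro s
      show (j a0 (br (δ s)) 1 : TopJoin A B) = j a0 (br (δ s)) (σ 0)
      rw [symm_zero]
    · intro s
      show baseP (A := A) (B := B) b0 a0 = j a0 (br (δ s)) (σ 1)
      rw [symm_one]
      exact j_zero a0 b0 (br (δ s))
    · intro r
      show (vert a0 b0 a0 (br x)).symm r = j a0 (br (δ 0)) (σ r)
      exact congrArg (fun z => (j a0 (br z) (σ r) : TopJoin A B)) δ.source.symm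
    · intro r
      show (vert a0 b0 a0 (br y)).symm r = j a0 (br (δ 1)) (σ r)
      exact congrArg (fun z => (j a0 (br z) (σ r) : TopJoin A B)) δ.target.symm
  rw [hcl_refl, Category.comp_id] at sq2
  have h1 : hcl δ = hcl (puTrack a0 x) ≫ hcl (apexProj a0 δ hδ) ≫ inv (hcl (puTrack a0 y)) := by
    rw [← Category.assoc, IsIso.eq_comp_inv]; exact sq1
  have h2 : hcl (apexProj a0 δ hδ) = hcl (wP a0 b0 (br x)) ≫ inv (hcl (wP a0 b0 (br y))) := by
    rw [IsIso.eq_comp_inv]; exact sq2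
  rw [h1, h2, cV, cV]
  simp [Category.assoc]


/-- pushing down then climbing equals pushing up, within one vertical segment -/
lemma sub_spec (x : TopJoin A B) :
    hcl (pdTrack b0 x) ≫ hcl (vert a0 b0 (ar x) (br x)) = hcl (puTrack a0 x) := by
  have sq : hcl (pdTrack b0 x) ≫ hcl (vert a0 b0 (ar x) (br x)) =
      hcl (Path.refl x) ≫ hcl (puTrack a0 x) := by
    refine square' ⟨fun p => j (ar x) (br x)
        ⟨(1 - (p.1 : ℝ)) * (tc x) + p.1 * p.2, by
          constructor <;>
          nlinarith [p.1.2.1, p.1.2.2, p.2.2.1, p.2.2.2, (tc x).2.1, (tc x).2.2]⟩,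
        continuous_j_comp continuous_const continuous_const
          (by apply Continuous.subtype_mk; fun_prop)⟩
      (pdTrack b0 x) (puTrack a0 x) (Path.refl x) (vert a0 b0 (ar x) (br x)) ?_ ?_ ?_ ?_
    · intro s
      show (j (ar x) (br x) (isc s (tc x)) : TopJoin A B) = _
      congr 1
      ext; simp [isc]
    · intro s
      show (j (ar x) (br x) (ksc s (tc x)) : TopJoin A B) = _
      congr 1
      ext; simp [ksc]
    · intro r
      show x = (j (ar x) (br x) ⟨(1 - ((0 : I) : ℝ)) * (tc x) + ((0 : I) : ℝ) * r, _⟩ : TopJoin A B)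
      conv_lhs => rw [rep_spec x]
      congr 1
      ext; simp
    · intro r
      show vert a0 b0 (ar x) (br x) r =
        (j (ar x) (br x) ⟨(1 - ((1 : I) : ℝ)) * (tc x) + ((1 : I) : ℝ) * r, _⟩ : TopJoin A B)
      rw [vert_apply]
      congr 1
      ext; simp
  rw [sq, hcl_refl, Category.id_comp]

/-- naturality of the vertical segments along a path in `A` -/
lemma sqA {a a' : A} (α : Path a a') (b : B) :
    hcl (abar b0 α) ≫ hcl (vert a0 b0 a' b) = hcl (vert a0 b0 a b) := by
  have sq : hcl (abar b0 α) ≫ hcl (vert a0 b0 a' b) =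
      hcl (vert a0 b0 a b) ≫ hcl (Path.refl (apexP (A := A) (B := B) a0 b)) := by
    refine square' ⟨fun p => j (α p.1) b p.2,
        continuous_j_comp (α.continuous.comp continuous_fst) continuous_const continuous_snd⟩
      (abar b0 α) (Path.refl _) (vert a0 b0 a b) (vert a0 b0 a' b) ?_ ?_ ?_ ?_
    · intro u
      exact (j_zero (α u) b b0).symm
    · intro s
      exact j_one a0 (α s) b
    · intro r
      exact congrArg (fun z => (j z b r : TopJoin A B)) α.source.symm
    · intro r
      exact congrArg (fun z => (j z b r : TopJoin A B)) α.target.symm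
  rw [sq, hcl_refl, Category.comp_id]

lemma compat (hApc : PathConnectedSpace A) (x : TopJoin A B)
    (h1 : tc x ≠ 1) (h0 : tc x ≠ 0) :
    cU a0 b0 x h1 ≫ θc a0 b0 = cV a0 b0 x h0 := by
  have α : Path (ar x) a0 := (hApc.joined (ar x) a0).somePath
  have hw : ∀ b : B, hcl (wP a0 b0 b) = inv (hcl (vert a0 b0 a0 b)) := by
    intro b
    rw [wP, hcl_symm, Groupoid.inv_eq_inv]
  have key1 := sqA a0 b0 α b0
  have key2 := sqA a0 b0 α (br x)
  have hsub := sub_spec a0 b0 x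
  rw [cU, cV, θc, Category.assoc, hw, hw, ← key1, ← hsub, ← key2]
  simp [Category.assoc]

lemma cc_eq_cU {x : TopJoin A B} (h1 : tc x ≠ 1) :
    cc a0 b0 x = cU a0 b0 x h1 ≫ θc a0 b0 := dif_pos h1

lemma cc_eq_cV (hApc : PathConnectedSpace A) {x : TopJoin A B} (h0 : tc x ≠ 0) :
    cc a0 b0 x = cV a0 b0 x h0 := by
  by_cases h1 : tc x ≠ 1
  · rw [cc_eq_cU a0 b0 h1]
    exact compat a0 b0 hApc x h1 h0
  · rw [cc, dif_neg h1]

lemma piece_spec (hApc : PathConnectedSpace A) {x y : TopJoin A B} (δ : Path x y)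
    (hδ : (∀ s, tc (δ s) ≠ 1) ∨ (∀ s, tc (δ s) ≠ 0)) :
    hcl δ = cc a0 b0 x ≫ inv (cc a0 b0 y) := by
  rcases hδ with hδ | hδ
  · have hx : tc x ≠ 1 := by have := hδ 0; rwa [δ.source] at this
    have hy : tc y ≠ 1 := by have := hδ 1; rwa [δ.target] at this
    rw [cc_eq_cU a0 b0 hx, cc_eq_cU a0 b0 hy, cU_spec a0 b0 δ hδ hx hy]
    simp [Category.assoc]
  · have hx : tc x ≠ 0 := by have := hδ 0; rwa [δ.source] at this
    have hy : tc y ≠ 0 := by have := hδ 1; rwa [δ.target] at this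
    rw [cc_eq_cV a0 b0 hApc hx, cc_eq_cV a0 b0 hApc hy, cV_spec a0 b0 δ hδ hx hy]


end Canon

section Cpiece
variable {X : Type*} [TopologicalSpace X]

def cpiece (g : C(I, X)) (u v : I) : Path (g u) (g v) := (iaff u v).map g.continuous

lemma cpiece_apply (g : C(I, X)) (u v s : I) : cpiece g u v s = g (iaff u v s) := rfl

lemma cpiece_split (g : C(I, X)) (u v w : I) :
    hcl (cpiece g u w) = hcl (cpiece g u v) ≫ hcl (cpiece g v w) := by
  rw [← hcl_trans]
  have h1 : (cpiece g u v).trans (cpiece g v w) =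
      ((iaff u v).trans (iaff v w)).map g.continuous := (Path.map_trans _ _ _).symm
  rw [hcl, hcl, h1]
  exact Quotient.sound (Path.Homotopic.map (ihom _ _) g)

end Cpiece

section Main
variable (a0 : A) (b0 : B)

lemma iaff_mem_Icc {u v : I} (huv : u ≤ v) (s : I) : iaff u v s ∈ Set.Icc u v := by
  constructor
  · show (u : ℝ) ≤ (1 - (s : ℝ)) * u + s * v
    nlinarith [s.2.1, s.2.2, (Subtype.coe_le_coe.mpr huv : (u:ℝ) ≤ v)]
  · show ((1 - (s : ℝ)) * u + s * v : ℝ) ≤ v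
    nlinarith [s.2.1, s.2.2, (Subtype.coe_le_coe.mpr huv : (u:ℝ) ≤ v)]

lemma main_refl (g : C(I, TopJoin A B)) {u v : I} (h : u = v) :
    hcl (cpiece g u v) = cc a0 b0 (g u) ≫ inv (cc a0 b0 (g v)) := by
  subst h
  have hconst : cpiece g u u = Path.refl (g u) := by
    apply Path.ext
    funext s
    show g (iaff u u s) = g u
    exact congrArg g (by ext; show (1 - (s:ℝ)) * u + s * u = u; ring)
  rw [hconst, hcl_refl]
  simp

lemma main_congr (g : C(I, TopJoin A B)) {u v u' v' : I} (hu : u = u') (hv : v = v')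
    (h : hcl (cpiece g u v) = cc a0 b0 (g u) ≫ inv (cc a0 b0 (g v))) :
    hcl (cpiece g u' v') = cc a0 b0 (g u') ≫ inv (cc a0 b0 (g v')) := by
  subst hu
  subst hv
  exact h

lemma main_cpiece (hApc : PathConnectedSpace A) (g : C(I, TopJoin A B)) :
    hcl (cpiece g 0 1) = cc a0 b0 (g 0) ≫ inv (cc a0 b0 (g 1)) := by
  classical
  set c : Bool → Set I := fun i =>
    if i then {s | tc (g s) ≠ 1} else {s | tc (g s) ≠ 0} with hc
  have hc₁ : ∀ i, IsOpen (c i) := by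
    intro i
    cases i
    · show IsOpen {s | tc (g s) ≠ (0 : I)}
      exact isOpen_ne.preimage (continuous_tc.comp g.continuous)
    · show IsOpen {s | tc (g s) ≠ (1 : I)}
      exact isOpen_ne.preimage (continuous_tc.comp g.continuous)
  have hc₂ : Set.univ ⊆ ⋃ i, c i := by
    intro s _
    by_cases h : tc (g s) = 1
    · refine Set.mem_iUnion.mpr ⟨false, ?_⟩
      show tc (g s) ≠ 0
      rw [h]
      exact Ione_ne_zero
    · exact Set.mem_iUnion.mpr ⟨true, h⟩
  obtain ⟨t, ht0, hmono, ⟨n, hn⟩, hsub⟩ :=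
    exists_monotone_Icc_subset_open_cover_unitInterval hc₁ hc₂
  have T : ∀ k, hcl (cpiece g 0 (t k)) = cc a0 b0 (g 0) ≫ inv (cc a0 b0 (g (t k))) := by
    intro k
    induction k with
    | zero => exact main_refl a0 b0 g ht0.symm
    | succ k ih =>
      rw [cpiece_split g 0 (t k) (t (k + 1)), ih]
      have hpiece : hcl (cpiece g (t k) (t (k + 1))) =
          cc a0 b0 (g (t k)) ≫ inv (cc a0 b0 (g (t (k + 1)))) := by
        obtain ⟨i, hi⟩ := hsub k
        have hmem : ∀ s : I, iaff (t k) (t (k + 1)) s ∈ Set.Icc (t k) (t (k + 1)) :=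
          iaff_mem_Icc (hmono (Nat.le_succ k))
        cases i
        · refine piece_spec a0 b0 hApc _ (Or.inr ?_)
          intro s
          have := hi (hmem s)
          exact this
        · refine piece_spec a0 b0 hApc _ (Or.inl ?_)
          intro s
          have := hi (hmem s)
          exact this
      rw [hpiece]
      simp
  exact main_congr a0 b0 g rfl (hn n le_rfl) (T n)

lemma transfer {x y u v : TopJoin A B} (hu : u = x) (hv : v = y)
    (p : Path x y) (q : Path u v) (hq : ∀ s, q s = p s)
    (h : hcl q = cc a0 b0 u ≫ inv (cc a0 b0 v)) :
    hcl p = cc a0 b0 x ≫ inv (cc a0 b0 y) := by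
  subst hu
  subst hv
  have heq : q = p := Path.ext (funext hq)
  rw [← heq]
  exact h

lemma main_spec (hApc : PathConnectedSpace A) {x y : TopJoin A B} (p : Path x y) :
    hcl p = cc a0 b0 x ≫ inv (cc a0 b0 y) := by
  refine transfer a0 b0 p.source p.target p (cpiece p.toContinuousMap 0 1) ?_
    (main_cpiece a0 b0 hApc p.toContinuousMap)
  intro s
  show p (iaff 0 1 s) = p s
  rw [iaff_zero_one]

lemma joined_all (hApc : PathConnectedSpace A) (x : TopJoin A B) :
    Joined x (baseP (A := A) (B := B) b0 a0) := by
  refine ⟨(pdTrack b0 x).trans (abar b0 ((hApc.joined (ar x) a0).somePath))⟩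

end Main
end TopJoinProof


open TopJoinProof in
/-- The join of a nonempty path-connected space with any nonempty space is
simply connected. -/
theorem join_simplyConnected {A B : Type*} [TopologicalSpace A] [TopologicalSpace B]
    (hA : Nonempty A) (hApc : PathConnectedSpace A) (hB : Nonempty B) :
    SimplyConnectedSpace (TopJoin A B) := by
  obtain ⟨a0⟩ := hA
  obtain ⟨b0⟩ := hB
  rw [simply_connected_iff_paths_homotopic]
  constructor
  · refine ⟨⟨Quot.mk _ (a0, b0, 0)⟩, fun x y => ?_⟩
    exact (joined_all a0 b0 hApc x).trans (joined_all a0 b0 hApc y).symm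
  · intro x y
    refine Subsingleton.intro fun P Q => ?_
    refine Quotient.inductionOn₂ P Q fun p q => ?_
    exact (main_spec a0 b0 hApc p).trans (main_spec a0 b0 hApc q).symm
end
end

section
/- The join of two nonempty discrete spaces, each having at least two points, is path-connected but not simply connected. -/
/-!
Every point of the join lies on an edge from a vertex of `A` to a vertex of `B`, and any two
vertices are linked through such edges, so the join is path-connected. Given `a ≠ a'` and `b ≠ b'`,
the edges form a square `a, b, a', b'`, and since `A` and `B` are discrete there is a continuous map
to `ℝ/4ℤ` winding this square once around. The two paths from `b` to `b'`, one through `a` and one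
through `a'`, then lift to paths in `ℝ` with the same start and different ends, so by homotopy
lifting for the covering `ℝ → ℝ/4ℤ` they are not homotopic.
-/

open unitInterval

theorem IsCoveringMap.not_homotopic_of_lift_ne {E X : Type*} [TopologicalSpace E]
    [TopologicalSpace X] {p : E → X} (cov : IsCoveringMap p) {x₀ x₁ : X} {γ₀ γ₁ : Path x₀ x₁}
    {Γ₀ Γ₁ : C(I, E)} (h₀ : p ∘ Γ₀ = γ₀) (h₁ : p ∘ Γ₁ = γ₁) (h_zero : Γ₀ 0 = Γ₁ 0)
    (h_one : Γ₀ 1 ≠ Γ₁ 1) : ¬ γ₀.Homotopic γ₁ := by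
  intro h
  have hx₀ : (γ₀ : C(I, X)) 0 = p (Γ₀ 0) := (congr_fun h₀ 0).symm
  have hx₁ : (γ₁ : C(I, X)) 0 = p (Γ₀ 0) := h_zero ▸ (congr_fun h₁ 0).symm
  have e₀ : Γ₀ = cov.liftPath γ₀ (Γ₀ 0) hx₀ := (cov.eq_liftPath_iff' ..).2 ⟨h₀, rfl⟩
  have e₁ : Γ₁ = cov.liftPath γ₁ (Γ₀ 0) hx₁ := (cov.eq_liftPath_iff' ..).2 ⟨h₁, h_zero.symm⟩
  rw [e₀, e₁] at h_one
  exact h_one (cov.liftPath_apply_one_eq_of_homotopicRel h _ hx₀ hx₁)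

namespace TopJoin

variable {A B : Type*}

/-- `mk x y 0` is the vertex `x` and `mk x y 1` the vertex `y`. -/
def mk (x : A) (y : B) (t : I) : TopJoin A B := Quot.mk _ (x, y, t)

lemma mk_zero (x : A) (y y' : B) : mk x y 0 = mk x y' 0 := Quot.sound (.zero x y y')

lemma mk_one (x x' : A) (y : B) : mk x y 1 = mk x' y 1 := Quot.sound (.one x x' y)

variable [TopologicalSpace A] [TopologicalSpace B]

lemma continuous_mk (x : A) (y : B) : Continuous (mk x y) :=
  continuous_quot_mk.comp (by fun_prop)

lemma joined_mk (x : A) (y : B) (s t : I) : Joined (mk x y s) (mk x y t) :=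
  have : PathConnectedSpace I :=
    isPathConnected_iff_pathConnectedSpace.mp ((convex_Icc (0 : ℝ) 1).isPathConnected ⟨0, by simp⟩)
  (PathConnectedSpace.joined s t).map (continuous_mk x y)

instance [Nonempty A] [Nonempty B] : PathConnectedSpace (TopJoin A B) := by
  obtain ⟨a⟩ := ‹Nonempty A›
  obtain ⟨b⟩ := ‹Nonempty B›
  have joined_base (z : TopJoin A B) : Joined z (mk a b 1) := by
    induction z using Quot.ind with
    | mk z =>
      obtain ⟨x, y, t⟩ := z
      have down := joined_mk x y t 0
      rw [mk_zero x y b] at down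
      have up := joined_mk x b 0 1
      rw [mk_one x a b] at up
      exact down.trans up
  exact ⟨⟨mk a b 1⟩, fun z w => (joined_base z).trans (joined_base w).symm⟩

def edge (x : A) (y : B) : Path (mk x y 0) (mk x y 1) where
  toFun := mk x y
  continuous_toFun := continuous_mk x y
  source' := rfl
  target' := rfl

@[simp]
lemma edge_apply (x : A) (y : B) (t : I) : edge x y t = mk x y t := rfl

noncomputable def pathThrough (x : A) (y y' : B) : Path (mk x y 1) (mk x y' 1) :=
  (edge x y).symm.trans ((edge x y').cast (mk_zero x y y') rfl)

variable [DiscreteTopology A] [DiscreteTopology B]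

def toAddCircle (p : ℝ) (u : A → ℝ) (v : B → ℝ) (n : A → B → ℤ) :
    C(TopJoin A B, AddCircle p) where
  toFun := Quot.lift
    (fun q => (((1 - q.2.2) * u q.1 + q.2.2 * (v q.2.1 + n q.1 q.2.1 * p) : ℝ) : AddCircle p)) <| by
    rintro _ _ (⟨x, y, y'⟩ | ⟨x, x', y⟩)
    · simp
    · simp [← zsmul_eq_mul]
  continuous_toFun := by
    refine continuous_quot_lift _ ((AddCircle.continuous_mk' p).comp ?_)
    have hu : Continuous fun q : A × B × I => u q.1 :=
      continuous_of_discreteTopology.comp continuous_fst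
    have hvn : Continuous fun q : A × B × I => v q.2.1 + n q.1 q.2.1 * p :=
      (continuous_of_discreteTopology (f := fun q : A × B => v q.2 + n q.1 q.2 * p)).comp
        (continuous_fst.prodMk (continuous_fst.comp continuous_snd))
    fun_prop

variable {p : ℝ} {u : A → ℝ} {v : B → ℝ} {n : A → B → ℤ}

@[simp]
lemma toAddCircle_mk (x : A) (y : B) (t : I) :
    toAddCircle p u v n (mk x y t) = (((1 - t) * u x + t * (v y + n x y * p) : ℝ) : AddCircle p) :=
  rfl

lemma toAddCircle_pathThrough (x : A) (y y' : B) (c : ℝ) (hy : v y + n x y * p - u x = c)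
    (hy' : v y' + n x y' * p - u x = -c) (t : I) :
    toAddCircle p u v n (pathThrough x y y' t) = ((u x + (1 - 2 * t) * c : ℝ) : AddCircle p) := by
  rw [pathThrough, Path.trans_apply]
  split_ifs
  · simp only [Path.symm_apply, Function.comp_apply, edge_apply, toAddCircle_mk, coe_symm_eq]
    congr 1
    linear_combination (1 - 2 * (t : ℝ)) * hy
  · simp only [Path.cast_coe, edge_apply, toAddCircle_mk]
    congr 1
    linear_combination (2 * (t : ℝ) - 1) * hy'

variable [DecidableEq A] [DecidableEq B]

/-- Winds the square `a → b → a' → b' → a` once around `ℝ/4ℤ`: the vertices `a'`, `b`, `b'` go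
to `2`, `1`, `3`, every other vertex of `A` to `0` and of `B` to `1`, and only the edge from `a'`
to `b'` wraps around. -/
noncomputable def squareWinding (a' : A) (b' : B) : C(TopJoin A B, AddCircle (4 : ℝ)) :=
  toAddCircle 4 (fun x => if x = a' then 2 else 0) (fun y => if y = b' then -1 else 1)
    (fun x y => if x = a' ∧ y = b' then 1 else 0)

lemma squareWinding_pathThrough_of_ne {a a' : A} {b b' : B} (ha : a ≠ a') (hb : b ≠ b') (t : I) :
    squareWinding a' b' (pathThrough a b b' t) = ((1 - 2 * t : ℝ) : AddCircle (4 : ℝ)) := by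
  rw [squareWinding, toAddCircle_pathThrough a b b' 1 (by simp [ha, hb]) (by simp [ha])]
  simp only [ha, if_false, zero_add, mul_one]

lemma squareWinding_pathThrough_self (a' : A) {b b' : B} (hb : b ≠ b') (t : I) :
    squareWinding a' b' (pathThrough a' b b' t) = ((1 + 2 * t : ℝ) : AddCircle (4 : ℝ)) := by
  rw [squareWinding, toAddCircle_pathThrough a' b b' (-1) (by norm_num [hb]) (by norm_num),
    if_pos rfl]
  congr 1
  ring

end TopJoin

/-- The join of two nonempty discrete spaces, each having at least two points,
is path-connected but not simply connected. -/
theorem join_discrete_not_simplyConnected {A B : Type*}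
    [TopologicalSpace A] [DiscreteTopology A] [TopologicalSpace B] [DiscreteTopology B]
    (hA : ∃ a a' : A, a ≠ a') (hB : ∃ b b' : B, b ≠ b') :
    PathConnectedSpace (TopJoin A B) ∧ ¬ SimplyConnectedSpace (TopJoin A B) := by
  classical
  obtain ⟨a, a', ha⟩ := hA
  obtain ⟨b, b', hb⟩ := hB
  have : Nonempty A := ⟨a⟩
  have : Nonempty B := ⟨b⟩
  refine ⟨inferInstance, fun _ => ?_⟩
  have hom := (SimplyConnectedSpace.paths_homotopic (TopJoin.pathThrough a b b')
    ((TopJoin.pathThrough a' b b').cast (TopJoin.mk_one a a' b) (TopJoin.mk_one a a' b'))).map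
      (TopJoin.squareWinding a' b')
  refine (AddCircle.isCoveringMap_coe (4 : ℝ)).not_homotopic_of_lift_ne
    (Γ₀ := ⟨fun t : I => 1 - 2 * t, by fun_prop⟩) (Γ₁ := ⟨fun t : I => 1 + 2 * t, by fun_prop⟩)
    ?_ ?_ (by simp) (by norm_num) hom
  · funext t
    exact (TopJoin.squareWinding_pathThrough_of_ne ha hb t).symm
  · funext t
    exact (TopJoin.squareWinding_pathThrough_self a' hb t).symm
end
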